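/- arXiv:2402.14736 — 2 statements merged into one kernel-verified Lean document; each statement's English description precedes it below -/
import Mathlib

section
/- Any unbiased ML-BLUE estimator Σ_{k=1}^K Σ_{ℓ=0}^L β̃^k_ℓ Q̂^k_ℓ can be rewritten exactly in the approximate control variate form Q̂ + Σ_{ℓ=1}^L α_ℓ (Q̂^e_ℓ − Q̂^μ_ℓ), where α_ℓ = Σ_k 1(β̃^k_ℓ ≥ 0) β̃^k_ℓ, Q̂ = Σ_k β̃^k_0 Q̂^k_0, Q̂^e_ℓ = Σ_k ω^{k,e}_ℓ Q̂^k_ℓ with ω^{k,e}_ℓ = 1(β̃^k_ℓ ≥ 0) β̃^k_ℓ / α_ℓ, and Q̂^μ_ℓ = Σ_k ω^{k,μ}_ℓ Q̂^k_ℓ with ω^{k,μ}_ℓ = −1(β̃^k_ℓ < 0) β̃^k_ℓ / α_ℓ. Moreover, each of Q̂, Q̂^e_ℓ, Q̂^μ_ℓ is an unbiased estimator of the corresponding model mean. -/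
open MeasureTheory Finset

/-! Split the level-ℓ weights β̃^k_ℓ into their positive and negative parts. For ℓ ≥ 1 the weights
sum to zero, so both parts have total mass α_ℓ; after dividing by α_ℓ each part is a convex
combination of unbiased estimators, hence unbiased, and α_ℓ times the difference of the two
recovers the original level-ℓ sum. -/

theorem ite_nonneg_add_ite_neg {α : Type*} [AddZeroClass α] [LinearOrder α] (x : α) :
    ((if 0 ≤ x then x else 0) + if x < 0 then x else 0) = x := by
  split_ifs with hle hlt hlt
  · exact absurd hlt (not_lt.2 hle)
  · exact add_zero x
  · exact zero_add x
  · exact absurd (lt_of_not_ge hle) hlt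

theorem sum_ite_neg_eq_neg_sum_ite_nonneg {ι α : Type*} [AddCommGroup α] [LinearOrder α]
    {s : Finset ι} {b : ι → α} (hb : ∑ k ∈ s, b k = 0) :
    ∑ k ∈ s, (if b k < 0 then b k else 0) = -∑ k ∈ s, (if 0 ≤ b k then b k else 0) := by
  refine eq_neg_of_add_eq_zero_left ?_
  rw [add_comm, ← sum_add_distrib]
  simpa only [ite_nonneg_add_ite_neg] using hb

theorem sum_div_eq_one_of_sum_eq {ι K : Type*} [DivisionSemiring K] {s : Finset ι}
    {w : ι → K} {a : K} (hw : ∑ k ∈ s, w k = a) (ha : a ≠ 0) :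
    ∑ k ∈ s, w k / a = 1 := by
  rw [← sum_div, hw, div_self ha]

theorem mul_sub_sum_div_mul {ι K : Type*} [Field K] (s : Finset ι) {a : K} (ha : a ≠ 0)
    (p n x : ι → K) :
    a * (∑ k ∈ s, p k / a * x k - ∑ k ∈ s, -n k / a * x k) = ∑ k ∈ s, (p k + n k) * x k := by
  rw [← sum_sub_distrib, mul_sum]
  refine sum_congr rfl fun k _ => ?_
  field_simp
  ring

theorem integral_sum_mul_of_integral_eq {Ω ι : Type*} [MeasurableSpace Ω] {μ : Measure Ω}
    {s : Finset ι} {X : ι → Ω → ℝ} {m : ℝ} (hX : ∀ k ∈ s, Integrable (X k) μ)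
    (hm : ∀ k ∈ s, ∫ ω, X k ω ∂μ = m) (c : ι → ℝ) :
    ∫ ω, ∑ k ∈ s, c k * X k ω ∂μ = (∑ k ∈ s, c k) * m := by
  rw [integral_finsetSum s fun k hk => (hX k hk).const_mul (c k), sum_mul]
  exact sum_congr rfl fun k hk => by rw [integral_const_mul, hm k hk]

theorem mlblue_is_acv_general {Ω : Type*} [MeasurableSpace Ω] (μ : Measure Ω)
    (L K : ℕ) (Q : Fin (L + 1) → Ω → ℝ) (Qhat : Fin K → Fin (L + 1) → Ω → ℝ)
    (βt : Fin K → Fin (L + 1) → ℝ)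
    (hint : ∀ k ℓ, Integrable (Qhat k ℓ) μ)
    (hunb : ∀ k ℓ, ∫ ω, Qhat k ℓ ω ∂μ = ∫ ω, Q ℓ ω ∂μ)
    (h0 : ∑ k, βt k 0 = 1)
    (hl : ∀ ℓ : Fin (L + 1), ℓ ≠ 0 → ∑ k, βt k ℓ = 0)
    (α : Fin (L + 1) → ℝ)
    (hα : ∀ ℓ, α ℓ = ∑ k, if 0 ≤ βt k ℓ then βt k ℓ else 0)
    (hαne : ∀ ℓ : Fin (L + 1), ℓ ≠ 0 → α ℓ ≠ 0) :
    (∀ ω, ∑ k, ∑ ℓ, βt k ℓ * Qhat k ℓ ω =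
      (∑ k, βt k 0 * Qhat k 0 ω) +
        ∑ ℓ ∈ univ.erase 0, α ℓ *
          ((∑ k, ((if 0 ≤ βt k ℓ then βt k ℓ else 0) / α ℓ) * Qhat k ℓ ω) -
           (∑ k, (-(if βt k ℓ < 0 then βt k ℓ else 0) / α ℓ) * Qhat k ℓ ω))) ∧
    (∫ ω, ∑ k, βt k 0 * Qhat k 0 ω ∂μ = ∫ ω, Q 0 ω ∂μ) ∧
    (∀ ℓ : Fin (L + 1), ℓ ≠ 0 →
      ∫ ω, ∑ k, ((if 0 ≤ βt k ℓ then βt k ℓ else 0) / α ℓ) * Qhat k ℓ ω ∂μ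
        = ∫ ω, Q ℓ ω ∂μ) ∧
    (∀ ℓ : Fin (L + 1), ℓ ≠ 0 →
      ∫ ω, ∑ k, (-(if βt k ℓ < 0 then βt k ℓ else 0) / α ℓ) * Qhat k ℓ ω ∂μ
        = ∫ ω, Q ℓ ω ∂μ) := by
  have hmean (ℓ : Fin (L + 1)) (c : Fin K → ℝ) :
      ∫ ω, ∑ k, c k * Qhat k ℓ ω ∂μ = (∑ k, c k) * ∫ ω, Q ℓ ω ∂μ :=
    integral_sum_mul_of_integral_eq (fun k _ => hint k ℓ) (fun k _ => hunb k ℓ) c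
  refine ⟨fun ω => ?_, by rw [hmean, h0, one_mul], fun ℓ hℓ => ?_, fun ℓ hℓ => ?_⟩
  · rw [sum_comm, ← add_sum_erase _ _ (mem_univ 0)]
    congr 1
    refine sum_congr rfl fun ℓ hℓ => ?_
    rw [mul_sub_sum_div_mul _ (hαne ℓ (ne_of_mem_erase hℓ))]
    simp only [ite_nonneg_add_ite_neg]
  · rw [hmean, sum_div_eq_one_of_sum_eq (hα ℓ).symm (hαne ℓ hℓ), one_mul]
  · have hneg : ∑ k, -(if βt k ℓ < 0 then βt k ℓ else 0) = α ℓ := by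
      rw [sum_neg_distrib, sum_ite_neg_eq_neg_sum_ite_nonneg (hl ℓ hℓ), neg_neg, hα]
    rw [hmean, sum_div_eq_one_of_sum_eq hneg (hαne ℓ hℓ), one_mul]

/-- any unbiased ML-BLUE can be rewritten exactly in approximate
control variate form, with the indicated weights, and each component estimator
(the baseline Q̂, and the Q̂ᵉ_ℓ and Q̂^μ_ℓ) is unbiased for the corresponding
model mean. -/
theorem mlblue_is_acv {Ω : Type*} [MeasurableSpace Ω] (μ : Measure Ω)
    [IsProbabilityMeasure μ]
    (L K : ℕ) (Q : Fin (L + 1) → Ω → ℝ) (Qhat : Fin K → Fin (L + 1) → Ω → ℝ)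
    (βt : Fin K → Fin (L + 1) → ℝ)
    (hQint : ∀ ℓ, Integrable (Q ℓ) μ)
    (hint : ∀ k ℓ, Integrable (Qhat k ℓ) μ)
    (hunb : ∀ k ℓ, ∫ ω, Qhat k ℓ ω ∂μ = ∫ ω, Q ℓ ω ∂μ)
    (h0 : ∑ k, βt k 0 = 1)
    (hl : ∀ ℓ : Fin (L + 1), ℓ ≠ 0 → ∑ k, βt k ℓ = 0)
    (α : Fin (L + 1) → ℝ)
    (hα : ∀ ℓ, α ℓ = ∑ k, if 0 ≤ βt k ℓ then βt k ℓ else 0)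
    (hαne : ∀ ℓ : Fin (L + 1), ℓ ≠ 0 → α ℓ ≠ 0) :
    (∀ ω, ∑ k, ∑ ℓ, βt k ℓ * Qhat k ℓ ω =
      (∑ k, βt k 0 * Qhat k 0 ω) +
        ∑ ℓ ∈ univ.erase 0, α ℓ *
          ((∑ k, ((if 0 ≤ βt k ℓ then βt k ℓ else 0) / α ℓ) * Qhat k ℓ ω) -
           (∑ k, (-(if βt k ℓ < 0 then βt k ℓ else 0) / α ℓ) * Qhat k ℓ ω))) ∧
    (∫ ω, ∑ k, βt k 0 * Qhat k 0 ω ∂μ = ∫ ω, Q 0 ω ∂μ) ∧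
    (∀ ℓ : Fin (L + 1), ℓ ≠ 0 →
      ∫ ω, ∑ k, ((if 0 ≤ βt k ℓ then βt k ℓ else 0) / α ℓ) * Qhat k ℓ ω ∂μ
        = ∫ ω, Q ℓ ω ∂μ) ∧
    (∀ ℓ : Fin (L + 1), ℓ ≠ 0 →
      ∫ ω, ∑ k, (-(if βt k ℓ < 0 then βt k ℓ else 0) / α ℓ) * Qhat k ℓ ω ∂μ
        = ∫ ω, Q ℓ ω ∂μ) :=
  mlblue_is_acv_general μ L K Q Qhat βt hint hunb h0 hl α hα hαne
end

section
/- If the covariance matrix C of the grouped estimator is block diagonal with blocks C^1,...,C^K (i.e., estimators in distinct groups are uncorrelated), each C^k positive definite, and the matrix Σ_{k=1}^K (R^k)^T (C^k)^{-1} R^k is invertible, then the optimal group weights are β^k = (C^k)^{-1} R^k (Σ_{k′} (R^{k′})^T (C^{k′})^{-1} R^{k′})^{-1} e^0 and the minimal variance equals (e^0)^T (Σ_{k} (R^k)^T (C^k)^{-1} R^k)^{-1} e^0. -/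
open Matrix Finset

/-!
Write `Q β = ∑ₖ βᵏ ⬝ Cᵏ βᵏ` and `w = M⁻¹ e⁰`. Since `Cᵏ β*ᵏ = Rᵏ w`, the cross term
`∑ₖ βᵏ ⬝ Cᵏ β*ᵏ` equals `(∑ₖ (Rᵏ)ᵀ βᵏ) ⬝ w = e⁰ ⬝ w` for every feasible `β`, in particular for
`β*` itself. Hence `Q β = Q β* + Q (β - β*) ≥ Q β*`.
-/

namespace Matrix

variable {α : Type*} [CommRing α] {ι : Type*} [Fintype ι] {m : ι → Type*}
  [∀ k, Fintype (m k)] {p : Type*} [Fintype p]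

theorem IsSymm.sub_dotProduct_mulVec_sub {n : Type*} [Fintype n] {C : Matrix n n α}
    (hC : C.IsSymm) (x y : n → α) :
    (x - y) ⬝ᵥ C *ᵥ (x - y) = x ⬝ᵥ C *ᵥ x - 2 * (x ⬝ᵥ C *ᵥ y) + y ⬝ᵥ C *ᵥ y := by
  have hyx : y ⬝ᵥ C *ᵥ x = x ⬝ᵥ C *ᵥ y := by
    rw [dotProduct_mulVec, ← mulVec_transpose, hC.eq, dotProduct_comm]
  rw [mulVec_sub, sub_dotProduct, dotProduct_sub, dotProduct_sub, hyx]
  ring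

theorem sum_dotProduct_mulVec_le_of_cross_eq {C : ∀ k, Matrix (m k) (m k) ℝ}
    (hC : ∀ k, (C k).PosSemidef) {β β₀ : ∀ k, m k → ℝ}
    (hcross : ∑ k, β k ⬝ᵥ C k *ᵥ β₀ k = ∑ k, β₀ k ⬝ᵥ C k *ᵥ β₀ k) :
    ∑ k, β₀ k ⬝ᵥ C k *ᵥ β₀ k ≤ ∑ k, β k ⬝ᵥ C k *ᵥ β k := by
  have hdiff : 0 ≤ ∑ k, (β k - β₀ k) ⬝ᵥ C k *ᵥ (β k - β₀ k) :=
    sum_nonneg fun k _ => by simpa using (hC k).dotProduct_mulVec_nonneg (β k - β₀ k)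
  simp only [fun k => (isHermitian_iff_isSymm.mp (hC k).isHermitian).sub_dotProduct_mulVec_sub,
    sum_add_distrib, sum_sub_distrib, ← mul_sum, hcross] at hdiff
  linarith

theorem sum_transpose_mulVec_dotProduct (R : ∀ k, Matrix (m k) p α) (β : ∀ k, m k → α)
    (w : p → α) : (∑ k, (R k)ᵀ *ᵥ β k) ⬝ᵥ w = ∑ k, β k ⬝ᵥ R k *ᵥ w := by
  simp only [sum_dotProduct, mulVec_transpose, dotProduct_mulVec]

variable [∀ k, DecidableEq (m k)]

theorem sum_transpose_mulVec_inv_mul_mulVec (C : ∀ k, Matrix (m k) (m k) α)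
    (R : ∀ k, Matrix (m k) p α) (N : Matrix p p α) (e : p → α) :
    ∑ k, (R k)ᵀ *ᵥ (((C k)⁻¹ * R k * N) *ᵥ e) = ((∑ k, (R k)ᵀ * (C k)⁻¹ * R k) * N) *ᵥ e := by
  simp only [mulVec_mulVec, sum_mul, sum_mulVec, Matrix.mul_assoc]

theorem mulVec_inv_mul_mulVec {n : Type*} [Fintype n] [DecidableEq n] {C : Matrix n n α}
    (hC : IsUnit C) (R : Matrix n p α) (N : Matrix p p α) (e : p → α) :
    C *ᵥ ((C⁻¹ * R * N) *ᵥ e) = R *ᵥ (N *ᵥ e) := by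
  rw [mulVec_mulVec, Matrix.mul_assoc, mul_nonsing_inv_cancel_left _ _
    ((isUnit_iff_isUnit_det C).mp hC), mulVec_mulVec]

end Matrix

theorem gacv_independent_groups_optimal_general {K L : ℕ} (n : Fin K → ℕ)
    (Ck : (k : Fin K) → Matrix (Fin (n k)) (Fin (n k)) ℝ)
    (hCk : ∀ k, (Ck k).PosDef)
    (Rk : (k : Fin K) → Matrix (Fin (n k)) (Fin (L + 1)) ℝ)
    (M : Matrix (Fin (L + 1)) (Fin (L + 1)) ℝ)
    (hM : M = ∑ k, (Rk k)ᵀ * (Ck k)⁻¹ * Rk k)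
    (hMinv : IsUnit M)
    (e0 : Fin (L + 1) → ℝ)
    (βs : (k : Fin K) → Fin (n k) → ℝ)
    (hβs : ∀ k, βs k = ((Ck k)⁻¹ * Rk k * M⁻¹).mulVec e0) :
    -- β* is feasible,
    (∑ k, ((Rk k)ᵀ).mulVec (βs k)) = e0 ∧
    -- β* achieves the claimed minimal variance,
    (∑ k, βs k ⬝ᵥ (Ck k).mulVec (βs k)) = e0 ⬝ᵥ M⁻¹.mulVec e0 ∧
    -- and β* is optimal among all feasible weights.
    (∀ β : (k : Fin K) → Fin (n k) → ℝ,
      (∑ k, ((Rk k)ᵀ).mulVec (β k)) = e0 →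
        e0 ⬝ᵥ M⁻¹.mulVec e0 ≤ ∑ k, β k ⬝ᵥ (Ck k).mulVec (β k)) := by
  have hfeas : ∑ k, (Rk k)ᵀ *ᵥ βs k = e0 := by
    simp only [hβs, sum_transpose_mulVec_inv_mul_mulVec, ← hM,
      mul_nonsing_inv _ ((isUnit_iff_isUnit_det M).mp hMinv), one_mulVec]
  have hcross : ∀ β : (k : Fin K) → Fin (n k) → ℝ, ∑ k, (Rk k)ᵀ *ᵥ β k = e0 →
      ∑ k, β k ⬝ᵥ Ck k *ᵥ βs k = e0 ⬝ᵥ M⁻¹ *ᵥ e0 := by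
    intro β hβ
    simp only [hβs, mulVec_inv_mul_mulVec (hCk _).isUnit, ← sum_transpose_mulVec_dotProduct, hβ]
  have hvar := hcross βs hfeas
  refine ⟨hfeas, hvar, fun β hβ => hvar ▸ ?_⟩
  exact sum_dotProduct_mulVec_le_of_cross_eq (fun k => (hCk k).posSemidef)
    ((hcross β hβ).trans hvar.symm)

/-- optimal weights under independent groups.  With a block
diagonal covariance (blocks C^k, each positive definite) and invertible
M = ∑ₖ (Rᵏ)ᵀ (Cᵏ)⁻¹ Rᵏ, the optimal group weights are
βᵏ = (Cᵏ)⁻¹ Rᵏ M⁻¹ e⁰ and the minimal variance is (e⁰)ᵀ M⁻¹ e⁰. -/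
theorem gacv_independent_groups_optimal {K L : ℕ} (n : Fin K → ℕ)
    (Ck : (k : Fin K) → Matrix (Fin (n k)) (Fin (n k)) ℝ)
    (hCk : ∀ k, (Ck k).PosDef)
    (Rk : (k : Fin K) → Matrix (Fin (n k)) (Fin (L + 1)) ℝ)
    (M : Matrix (Fin (L + 1)) (Fin (L + 1)) ℝ)
    (hM : M = ∑ k, (Rk k)ᵀ * (Ck k)⁻¹ * Rk k)
    (hMinv : IsUnit M)
    (e0 : Fin (L + 1) → ℝ) (he0 : e0 = fun i => if i = 0 then 1 else 0)
    (βs : (k : Fin K) → Fin (n k) → ℝ)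
    (hβs : ∀ k, βs k = ((Ck k)⁻¹ * Rk k * M⁻¹).mulVec e0) :
    -- β* is feasible,
    (∑ k, ((Rk k)ᵀ).mulVec (βs k)) = e0 ∧
    -- β* achieves the claimed minimal variance,
    (∑ k, βs k ⬝ᵥ (Ck k).mulVec (βs k)) = e0 ⬝ᵥ M⁻¹.mulVec e0 ∧
    -- and β* is optimal among all feasible weights.
    (∀ β : (k : Fin K) → Fin (n k) → ℝ,
      (∑ k, ((Rk k)ᵀ).mulVec (β k)) = e0 →
        e0 ⬝ᵥ M⁻¹.mulVec e0 ≤ ∑ k, β k ⬝ᵥ (Ck k).mulVec (β k)) :=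
  gacv_independent_groups_optimal_general n Ck hCk Rk M hM hMinv e0 βs hβs
end
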